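/- Let L(u) = w(log(1+exp(αu)) - αsu) with w ≥ 0, α > 0, s ∈ {0,1}. If s = 1 and u' ≥ u, then L(u') ≤ L(u); if s = 0 and u' ≤ u, then L(u') ≤ L(u). Combined with Lemma 1, one SGD step on the smoothed loss does not increase the binary-code loss L(⟨sgn(g_i), sgn(g_j)⟩). (Theorem 2 of the paper.) -/
import Mathlib


noncomputable def sgn (x : ℝ) : ℝ := if 0 ≤ x then 1 else -1

lemma sgn_pos {x : ℝ} (h : 0 < x) : sgn x = 1 := by simp [sgn, h.le]
lemma sgn_neg {x : ℝ} (h : x < 0) : sgn x = -1 := by simp [sgn, not_le.mpr h]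
lemma sgn_mem (x : ℝ) : sgn x = 1 ∨ sgn x = -1 := by
  unfold sgn; split <;> simp

lemma sgn_mul_le_one (x y : ℝ) : sgn x * sgn y ≤ 1 := by
  rcases sgn_mem x with h | h <;> rcases sgn_mem y with h' | h' <;>
    simp [h, h']

lemma neg_one_le_sgn_mul (x y : ℝ) : -1 ≤ sgn x * sgn y := by
  rcases sgn_mem x with h | h <;> rcases sgn_mem y with h' | h' <;>
    simp [h, h']

lemma log_aux (a : ℝ) : Real.log (1 + Real.exp a) - a = Real.log (1 + Real.exp (-a)) := by
  have h : (1 : ℝ) + Real.exp a = Real.exp a * (1 + Real.exp (-a)) := by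
    rw [mul_add, mul_one, ← Real.exp_add]
    simp [add_comm]
  rw [h, Real.log_mul (Real.exp_ne_zero a) (by positivity), Real.log_exp]
  ring

lemma L_anti (α w : ℝ) (hα : 0 < α) (hw : 0 ≤ w) {u u' : ℝ} (h : u ≤ u') :
    w * (Real.log (1 + Real.exp (α * u')) - α * u') ≤
    w * (Real.log (1 + Real.exp (α * u)) - α * u) := by
  rw [log_aux, log_aux]
  apply mul_le_mul_of_nonneg_left _ hw
  apply Real.log_le_log (by positivity)
  have : Real.exp (-(α * u')) ≤ Real.exp (-(α * u)) := by
    apply Real.exp_le_exp.mpr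
    nlinarith
  linarith

lemma L_mono (α w : ℝ) (hα : 0 < α) (hw : 0 ≤ w) {u u' : ℝ} (h : u' ≤ u) :
    w * Real.log (1 + Real.exp (α * u')) ≤ w * Real.log (1 + Real.exp (α * u)) := by
  apply mul_le_mul_of_nonneg_left _ hw
  apply Real.log_le_log (by positivity)
  have : Real.exp (α * u') ≤ Real.exp (α * u) := by
    apply Real.exp_le_exp.mpr; nlinarith
  linarith

theorem sgd_step_decreases_binary_loss (K : ℕ) (g₁ g₂ : Fin K → ℝ)
    (hg₁ : ∀ k, g₁ k ≠ 0) (hg₂ : ∀ k, g₂ k ≠ 0)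
    (s α w η : ℝ) (hs : s = 0 ∨ s = 1) (hα : 0 < α) (hw : 0 < w) (hη : 0 < η)
    (c : ℝ)
    (hc : c = η * w * α * (1 / (1 + Real.exp (-α * ∑ k, g₁ k * g₂ k)) - s))
    (g₁' g₂' : Fin K → ℝ)
    (hg₁' : g₁' = fun k => g₁ k - c * g₂ k)
    (hg₂' : g₂' = fun k => g₂ k - c * g₁ k)
    (L : ℝ → ℝ)
    (hL : L = fun u => w * (Real.log (1 + Real.exp (α * u)) - α * s * u)) :
    (s = 1 → ∀ u u' : ℝ, u ≤ u' → L u' ≤ L u) ∧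
    (s = 0 → ∀ u u' : ℝ, u' ≤ u → L u' ≤ L u) ∧
    L (∑ k, sgn (g₁' k) * sgn (g₂' k)) ≤ L (∑ k, sgn (g₁ k) * sgn (g₂ k)) := by
  have hexp : 0 < Real.exp (-α * ∑ k, g₁ k * g₂ k) := Real.exp_pos _
  set E := Real.exp (-α * ∑ k, g₁ k * g₂ k) with hE
  have hσpos : 0 < 1 / (1 + E) := by positivity
  have hσlt : 1 / (1 + E) < 1 := by
    rw [div_lt_one (by positivity)]; linarith
  have h1 : s = 1 → ∀ u u' : ℝ, u ≤ u' → L u' ≤ L u := by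
    intro hs1 u u' h
    subst hL hs1
    simpa using L_anti α w hα hw.le h
  have h0 : s = 0 → ∀ u u' : ℝ, u' ≤ u → L u' ≤ L u := by
    intro hs0 u u' h
    subst hL hs0
    simpa using L_mono α w hα hw.le h
  refine ⟨h1, h0, ?_⟩
  rcases hs with hs0 | hs1
  · -- s = 0, so c > 0, and the sum of sign products does not increase
    have hcpos : 0 < c := by
      rw [hc, hs0]; simp only [sub_zero]
      positivity
    apply h0 hs0
    apply Finset.sum_le_sum
    intro k _
    rcases lt_or_gt_of_ne (hg₁ k) with h1k | h1k <;>
      rcases lt_or_gt_of_ne (hg₂ k) with h2k | h2k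
    · -- both negative: product 1
      rw [sgn_neg h1k, sgn_neg h2k]
      norm_num
      exact sgn_mul_le_one _ _
    · -- g₁ < 0 < g₂ : product -1 preserved
      have e1 : g₁' k < 0 := by rw [hg₁']; dsimp; nlinarith
      have e2 : 0 < g₂' k := by rw [hg₂']; dsimp; nlinarith
      rw [sgn_neg h1k, sgn_pos h2k, sgn_neg e1, sgn_pos e2]
    · -- g₂ < 0 < g₁
      have e1 : 0 < g₁' k := by rw [hg₁']; dsimp; nlinarith
      have e2 : g₂' k < 0 := by rw [hg₂']; dsimp; nlinarith
      rw [sgn_pos h1k, sgn_neg h2k, sgn_pos e1, sgn_neg e2]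
    · rw [sgn_pos h1k, sgn_pos h2k]
      norm_num
      exact sgn_mul_le_one _ _
  · -- s = 1, so c < 0, and the sum of sign products does not decrease
    have hcneg : c < 0 := by
      rw [hc, hs1]
      have : 1 / (1 + E) - 1 < 0 := by linarith
      have hpos : 0 < η * w * α := by positivity
      nlinarith
    apply h1 hs1
    apply Finset.sum_le_sum
    intro k _
    rcases lt_or_gt_of_ne (hg₁ k) with h1k | h1k <;>
      rcases lt_or_gt_of_ne (hg₂ k) with h2k | h2k
    · -- both negative: signs preserved
      have e1 : g₁' k < 0 := by rw [hg₁']; dsimp; nlinarith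
      have e2 : g₂' k < 0 := by rw [hg₂']; dsimp; nlinarith
      rw [sgn_neg h1k, sgn_neg h2k, sgn_neg e1, sgn_neg e2]
    · rw [sgn_neg h1k, sgn_pos h2k]
      norm_num
      exact neg_one_le_sgn_mul _ _
    · rw [sgn_pos h1k, sgn_neg h2k]
      norm_num
      exact neg_one_le_sgn_mul _ _
    · have e1 : 0 < g₁' k := by rw [hg₁']; dsimp; nlinarith
      have e2 : 0 < g₂' k := by rw [hg₂']; dsimp; nlinarith
      rw [sgn_pos h1k, sgn_pos h2k, sgn_pos e1, sgn_pos e2]
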